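/- Let H = C^d with d ≥ 2, S the swap operator on H⊗H, and define Φ: B(H) → B(H⊗H) by Φ(X) = μ S(I⊗X) + (1-μ) S(X⊗I) for a complex number μ. Then Φ is covariant under unitary evolution (Φ(UXU*) = (U⊗U)Φ(X)(U*⊗U*) for all unitary U) and satisfies the broadcasting condition tr_1[Φ(X)] = tr_2[Φ(X)] = X for all X. -/

import Mathlib

open Matrix Kronecker ComplexOrder

/-- The swap operator on `H ⊗ H`, as a matrix: `S (x ⊗ y) = y ⊗ x`. -/
def swap (n : Type*) [DecidableEq n] : Matrix (n × n) (n × n) ℂ :=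
  Matrix.of fun p q => if p.1 = q.2 ∧ p.2 = q.1 then (1 : ℂ) else 0

/-- Partial trace over the first tensor factor: `tr₁ (A ⊗ B) = tr A • B`. -/
noncomputable def ptrace1 {n : Type*} [Fintype n] (M : Matrix (n × n) (n × n) ℂ) : Matrix n n ℂ :=
  Matrix.of fun j l => ∑ i, M (i, j) (i, l)

/-- Partial trace over the second tensor factor: `tr₂ (A ⊗ B) = tr B • A`. -/
noncomputable def ptrace2 {n : Type*} [Fintype n] (M : Matrix (n × n) (n × n) ℂ) : Matrix n n ℂ :=
  Matrix.of fun i k => ∑ j, M (i, j) (k, j)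

lemma swap_mul_apply {n : Type*} [Fintype n] [DecidableEq n]
    (M : Matrix (n × n) (n × n) ℂ) (p q : n × n) :
    (swap n * M) p q = M (p.2, p.1) q := by
  rw [Matrix.mul_apply, Fintype.sum_prod_type]
  simp [_root_.swap, ite_and]

lemma mul_swap_apply {n : Type*} [Fintype n] [DecidableEq n]
    (M : Matrix (n × n) (n × n) ℂ) (p q : n × n) :
    (M * swap n) p q = M p (q.2, q.1) := by
  rw [Matrix.mul_apply, Fintype.sum_prod_type]
  simp [_root_.swap, ite_and, eq_comm]

lemma swap_mul_kron {n : Type*} [Fintype n] [DecidableEq n]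
    (A B : Matrix n n ℂ) : swap n * (A ⊗ₖ B) = (B ⊗ₖ A) * swap n := by
  ext p q
  rw [swap_mul_apply, mul_swap_apply]
  simp [kroneckerMap_apply, mul_comm]

/-- `Φ(X) = μ S(I⊗X) + (1-μ) S(X⊗I)` is unitarily covariant and broadcasts. -/
theorem mu_family_covariant_and_broadcasting {d : ℕ} (hd : 2 ≤ d) (mu : ℂ)
    (Phi : Matrix (Fin d) (Fin d) ℂ → Matrix (Fin d × Fin d) (Fin d × Fin d) ℂ)
    (hPhi : ∀ X, Phi X = mu • (swap (Fin d) * ((1 : Matrix (Fin d) (Fin d) ℂ) ⊗ₖ X))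
        + (1 - mu) • (swap (Fin d) * (X ⊗ₖ (1 : Matrix (Fin d) (Fin d) ℂ)))) :
    (∀ U : Matrix (Fin d) (Fin d) ℂ, U ∈ Matrix.unitaryGroup (Fin d) ℂ →
      ∀ X, Phi (U * X * Uᴴ) = (U ⊗ₖ U) * Phi X * (Uᴴ ⊗ₖ Uᴴ)) ∧
    (∀ X, ptrace1 (Phi X) = X ∧ ptrace2 (Phi X) = X) := by
  constructor
  · intro U hU X
    have hU1 : U * Uᴴ = 1 := by
      have := Matrix.mem_unitaryGroup_iff.mp hU
      rwa [Matrix.star_eq_conjTranspose] at this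
    have key : ∀ A B : Matrix (Fin d) (Fin d) ℂ,
        (U ⊗ₖ U) * (swap (Fin d) * (A ⊗ₖ B)) * (Uᴴ ⊗ₖ Uᴴ)
          = swap (Fin d) * ((U * A * Uᴴ) ⊗ₖ (U * B * Uᴴ)) := by
      intro A B
      calc (U ⊗ₖ U) * (swap (Fin d) * (A ⊗ₖ B)) * (Uᴴ ⊗ₖ Uᴴ)
          = ((U ⊗ₖ U) * swap (Fin d)) * ((A ⊗ₖ B) * (Uᴴ ⊗ₖ Uᴴ)) := by
            rw [← mul_assoc, mul_assoc]
        _ = (swap (Fin d) * (U ⊗ₖ U)) * ((A * Uᴴ) ⊗ₖ (B * Uᴴ)) := by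
            rw [← swap_mul_kron, ← Matrix.mul_kronecker_mul]
        _ = swap (Fin d) * ((U * (A * Uᴴ)) ⊗ₖ (U * (B * Uᴴ))) := by
            rw [mul_assoc, ← Matrix.mul_kronecker_mul]
        _ = swap (Fin d) * ((U * A * Uᴴ) ⊗ₖ (U * B * Uᴴ)) := by
            rw [mul_assoc U A, mul_assoc U B]
    have hone : U * 1 * Uᴴ = 1 := by rw [mul_one]; exact hU1
    rw [hPhi, hPhi]
    rw [Matrix.mul_add, Matrix.add_mul, Matrix.mul_smul, Matrix.smul_mul,
      Matrix.mul_smul, Matrix.smul_mul, key, key, hone]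
  · intro X
    rw [hPhi]
    constructor <;> ext a b <;>
      simp [ptrace1, ptrace2, swap_mul_apply, Matrix.one_apply, Finset.sum_add_distrib,
        Finset.mul_sum, mul_ite, ite_mul, smul_eq_mul] <;> ring
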